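/- For m, n ≥ 0, the q-identity Σ_{k=0}^{⌊n/2⌋} [m+k choose k]_{q^2} · [m+1 choose n−2k]_q · q^{C(n−2k,2)} = [m+n choose n]_q holds as an identity of polynomials in q. -/

import Mathlib

open Polynomial

/-- Gaussian binomial coefficient `[n choose k]_q` as a polynomial in `ℤ[q]`,
defined by the Pascal-type recurrence; it is `0` when `k > n`. -/
noncomputable def gauss : ℕ → ℕ → Polynomial ℤ
  | _, 0 => 1
  | 0, _ + 1 => 0
  | n + 1, k + 1 => gauss n (k + 1) + Polynomial.X ^ (n - k) * gauss n k

/-- `p(N,k,n)`: number of partitions of `n` into at most `k` parts, each part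
positive and at most `N`. -/
noncomputable def pcount (N k n : ℕ) : ℕ :=
  Nat.card {s : Multiset ℕ //
    s.sum = n ∧ s.card ≤ k ∧ ∀ x ∈ s, 0 < x ∧ x ≤ N}

/-- `p̄_r(N₁,N₂,k₁,k₂,n)`: number of two-colored partitions of `n` with at most `k₁`
parts of the first kind, each positive, divisible by `r` and at most `N₁·r`, and at
most `k₂` parts of the second kind, each positive and at most `N₂`. -/
noncomputable def pbar (r N1 N2 k1 k2 n : ℕ) : ℕ :=
  Nat.card {p : Multiset ℕ × Multiset ℕ //
    p.1.sum + p.2.sum = n ∧ p.1.card ≤ k1 ∧ p.2.card ≤ k2 ∧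
    (∀ x ∈ p.1, 0 < x ∧ r ∣ x ∧ x ≤ N1 * r) ∧ (∀ x ∈ p.2, 0 < x ∧ x ≤ N2)}

/-- `p̄_r` with integer arguments: zero if any argument is negative. -/
noncomputable def pbarZ (r : ℕ) (N1 N2 k1 k2 n : ℤ) : ℕ :=
  if 0 ≤ N1 ∧ 0 ≤ N2 ∧ 0 ≤ k1 ∧ 0 ≤ k2 ∧ 0 ≤ n then
    pbar r N1.toNat N2.toNat k1.toNat k2.toNat n.toNat
  else 0

/-- `Q̄_r(N₁,N₂,k₁,k₂,n)`: number of two-colored partitions of `n` with exactly `k₁`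
distinct parts of the first kind, each positive, divisible by `r` and at most `N₁·r`,
and exactly `k₂` distinct parts of the second kind, each positive and at most `N₂`. -/
noncomputable def Qbar (r N1 N2 k1 k2 n : ℕ) : ℕ :=
  Nat.card {p : Multiset ℕ × Multiset ℕ //
    p.1.sum + p.2.sum = n ∧ p.1.Nodup ∧ p.2.Nodup ∧ p.1.card = k1 ∧ p.2.card = k2 ∧
    (∀ x ∈ p.1, 0 < x ∧ r ∣ x ∧ x ≤ N1 * r) ∧ (∀ x ∈ p.2, 0 < x ∧ x ≤ N2)}


/-! Write `S(a, b, n) = ∑ₖ [a+k choose k]_{q²} [b choose n-2k]_q q^{C(n-2k,2)}`, so that the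
claim is `S(m, m+1, n) = [m+n choose n]_q`. Pascal's rule
`[b+1 choose i+1] = [b choose i+1] + q^{b-i} [b choose i]`, applied termwise to either Gaussian
factor, gives the recurrences `S(a, b+1, n+1) = S(a, b, n+1) + q^b S(a, b, n)` and
`S(a+1, b, n+2) = S(a, b, n+2) + q^{2a+2} S(a+1, b, n)`. Combining them expresses
`S(m+1, m+2, n+2)` through `S(m, m+1, n+2)`, `S(m, m+1, n+1)` and `S(m+1, m+2, n)`, and two more
applications of Pascal's rule show that `[m+n choose n]_q` satisfies the same relation; the case
`m = 0` is immediate since `[1 choose j]_q = 0` for `j ≥ 2`. -/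

lemma gauss_zero_right (n : ℕ) : gauss n 0 = 1 := by
  cases n <;> rfl

lemma gauss_succ_succ (n k : ℕ) :
    gauss (n + 1) (k + 1) = gauss n (k + 1) + X ^ (n - k) * gauss n k := rfl

lemma gauss_eq_zero_of_lt {n k : ℕ} (h : n < k) : gauss n k = 0 := by
  induction n generalizing k with
  | zero => obtain ⟨k, rfl⟩ := Nat.exists_eq_add_one.mpr h; rfl
  | succ n ih =>
    obtain ⟨k, rfl⟩ := Nat.exists_eq_add_one.mpr (Nat.zero_lt_of_lt h)
    rw [gauss_succ_succ, ih (by omega), ih (by omega), mul_zero, add_zero]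

lemma gauss_self (n : ℕ) : gauss n n = 1 := by
  induction n with
  | zero => rfl
  | succ n ih => rw [gauss_succ_succ, gauss_eq_zero_of_lt n.lt_succ_self, ih, Nat.sub_self]; simp

lemma gauss_add_succ_succ (a k : ℕ) :
    gauss (a + 1 + (k + 1)) (k + 1) =
      gauss (a + (k + 1)) (k + 1) + X ^ (a + 1) * gauss (a + 1 + k) k := by
  rw [← add_assoc, gauss_succ_succ, Nat.add_sub_cancel, add_right_comm, add_assoc]

lemma gauss_succ_succ_mul_X_pow_choose (b i : ℕ) :
    gauss (b + 1) (i + 1) * X ^ (i + 1).choose 2 =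
      gauss b (i + 1) * X ^ (i + 1).choose 2 + X ^ b * (gauss b i * X ^ i.choose 2) := by
  rcases le_or_gt i b with hib | hbi
  · have hchoose : (i + 1).choose 2 = i + i.choose 2 := by
      rw [Nat.choose_succ_succ', Nat.choose_one_right]
    have hexp : b - i + (i + 1).choose 2 = b + i.choose 2 := by omega
    rw [gauss_succ_succ, add_mul, mul_right_comm, ← pow_add, hexp, pow_add]
    ring
  · rw [gauss_eq_zero_of_lt hbi, gauss_eq_zero_of_lt (hbi.trans i.lt_succ_self),
      gauss_eq_zero_of_lt (Nat.succ_lt_succ hbi)]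
    simp

noncomputable def guoYangTerm (a b n k : ℕ) : ℤ[X] :=
  (gauss (a + k) k).comp (X ^ 2) * gauss b (n - 2 * k) * X ^ (n - 2 * k).choose 2

noncomputable def guoYangSum (a b n : ℕ) : ℤ[X] :=
  ∑ k ∈ Finset.range (n / 2 + 1), guoYangTerm a b n k

lemma guoYangTerm_zero (a b n : ℕ) : guoYangTerm a b n 0 = gauss b n * X ^ n.choose 2 := by
  simp [guoYangTerm, gauss_zero_right]

lemma guoYangTerm_of_eq_two_mul {a b n k : ℕ} (h : n = 2 * k) :
    guoYangTerm a b n k = (gauss (a + k) k).comp (X ^ 2) := by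
  simp [guoYangTerm, h, gauss_zero_right]

lemma guoYangTerm_succ_right {a b n k : ℕ} (h : 2 * k ≤ n) :
    guoYangTerm a (b + 1) (n + 1) k = guoYangTerm a b (n + 1) k + X ^ b * guoYangTerm a b n k := by
  have hi : n + 1 - 2 * k = n - 2 * k + 1 := by omega
  simp only [guoYangTerm, hi, mul_assoc, gauss_succ_succ_mul_X_pow_choose]
  ring

lemma guoYangTerm_succ_left (a b n k : ℕ) :
    guoYangTerm (a + 1) b (n + 2) (k + 1) =
      guoYangTerm a b (n + 2) (k + 1) + X ^ (2 * (a + 1)) * guoYangTerm (a + 1) b n k := by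
  have hi : n + 2 - 2 * (k + 1) = n - 2 * k := by omega
  simp only [guoYangTerm, hi, gauss_add_succ_succ, add_comp, mul_comp, X_pow_comp, ← pow_mul]
  ring

lemma guoYangSum_succ_right (a b n : ℕ) :
    guoYangSum a (b + 1) (n + 1) = guoYangSum a b (n + 1) + X ^ b * guoYangSum a b n := by
  have hterm : ∀ k ∈ Finset.range (n / 2 + 1),
      guoYangTerm a (b + 1) (n + 1) k = guoYangTerm a b (n + 1) k + X ^ b * guoYangTerm a b n k :=
    fun k hk => guoYangTerm_succ_right (by rw [Finset.mem_range] at hk; omega)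
  unfold guoYangSum
  rcases Nat.even_or_odd n with hn | hn
  · have hhalf : (n + 1) / 2 = n / 2 := by rcases hn with ⟨t, rfl⟩; omega
    rw [hhalf, Finset.sum_congr rfl hterm, Finset.sum_add_distrib, Finset.mul_sum]
  -- for odd `n` the sums for `n + 1` have one extra term, with `[b+1 choose 0] = [b choose 0]`
  · have hhalf : (n + 1) / 2 = n / 2 + 1 := by rcases hn with ⟨t, rfl⟩; omega
    have hlast : n + 1 = 2 * (n / 2 + 1) := by rcases hn with ⟨t, rfl⟩; omega
    rw [hhalf, Finset.sum_range_succ, Finset.sum_range_succ _ (n / 2 + 1),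
      Finset.sum_congr rfl hterm, Finset.sum_add_distrib, Finset.mul_sum,
      guoYangTerm_of_eq_two_mul hlast, guoYangTerm_of_eq_two_mul hlast]
    ring

lemma guoYangSum_succ_left (a b n : ℕ) :
    guoYangSum (a + 1) b (n + 2) =
      guoYangSum a b (n + 2) + X ^ (2 * (a + 1)) * guoYangSum (a + 1) b n := by
  have hn : (n + 2) / 2 + 1 = n / 2 + 1 + 1 := by omega
  unfold guoYangSum
  rw [hn, Finset.sum_range_succ', Finset.sum_range_succ' _ (n / 2 + 1), guoYangTerm_zero,
    guoYangTerm_zero]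
  simp only [guoYangTerm_succ_left, Finset.sum_add_distrib, Finset.mul_sum]
  ring

lemma guoYangSum_zero_one (n : ℕ) : guoYangSum 0 1 n = 1 := by
  unfold guoYangSum
  rw [Finset.sum_eq_single_of_mem (n / 2) (Finset.self_mem_range_succ _)]
  · have hrem : n - 2 * (n / 2) = n % 2 := by omega
    rcases Nat.mod_two_eq_zero_or_one n with h | h <;>
      simp [guoYangTerm, hrem, h, gauss_self, gauss_zero_right]
  · intro k hk hne
    rw [Finset.mem_range] at hk
    rw [guoYangTerm, gauss_eq_zero_of_lt (show 1 < n - 2 * k by omega), mul_zero, zero_mul]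

lemma guoYangSum_self_succ (m n : ℕ) : guoYangSum m (m + 1) n = gauss (m + n) n := by
  induction m generalizing n with
  | zero => rw [guoYangSum_zero_one, zero_add, gauss_self]
  | succ m ih =>
    induction n using Nat.strong_induction_on with
    | _ n ihn =>
      match n with
      | 0 => simp [guoYangSum, guoYangTerm, gauss_zero_right]
      | 1 => simp [guoYangSum, guoYangTerm, gauss_zero_right]
      | n + 2 =>
        rw [guoYangSum_succ_left, guoYangSum_succ_right, ih, ih, ihn n (by omega),
          gauss_add_succ_succ m (n + 1), gauss_add_succ_succ m n]
        ring

theorem stmt12 (m n : ℕ) :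
    ∑ k ∈ Finset.range (n / 2 + 1),
        (gauss (m + k) k).comp (Polynomial.X ^ 2) * gauss (m + 1) (n - 2 * k) *
          Polynomial.X ^ (n - 2 * k).choose 2 =
      gauss (m + n) n :=
  guoYangSum_self_succ m n
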